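/- Let σ = σ₁(x)σ₂(y) be a positive smooth separable conductivity on a domain Ω ⊆ ℝ², let u be a smooth solution of div(σ grad u) = 0, and set W = √σ ∂_x u - i√σ ∂_y u and p = √(σ₂)/√(σ₁). Then W satisfies the Vekua equation ∂_{z̄}W = ((∂_{z̄}p)/p)·conj(W) on Ω. -/

import Mathlib

open Complex

noncomputable def cpdx (f : ℝ → ℝ → ℂ) (x y : ℝ) : ℂ := deriv (fun t => f t y) x
noncomputable def cpdy (f : ℝ → ℝ → ℂ) (x y : ℝ) : ℂ := deriv (fun t => f x t) y

/-- ∂_z = ∂_x - i ∂_y -/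
noncomputable def dz (f : ℝ → ℝ → ℂ) (x y : ℝ) : ℂ := cpdx f x y - Complex.I * cpdy f x y

/-- ∂_z̄ = ∂_x + i ∂_y -/
noncomputable def dzb (f : ℝ → ℝ → ℂ) (x y : ℝ) : ℂ := cpdx f x y + Complex.I * cpdy f x y

noncomputable def rpdx (f : ℝ → ℝ → ℝ) (x y : ℝ) : ℝ := deriv (fun t => f t y) x
noncomputable def rpdy (f : ℝ → ℝ → ℝ) (x y : ℝ) : ℝ := deriv (fun t => f x t) y

theorem vekua_alg (A B d1 d2 ux uy uxx uyy uxy : ℂ) (hA : A ≠ 0) (hB : B ≠ 0)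
    (hdiv : d1 * (B*B) * ux + (A*A) * (B*B) * uxx + ((A*A) * d2 * uy + (A*A) * (B*B) * uyy) = 0) :
    ((1/(2*A)*d1)*B*ux + A*B*uxx - I*((1/(2*A)*d1)*B*uy + A*B*uxy))
      + I*((A*(1/(2*B)*d2)*ux + A*B*uxy) - I*(A*(1/(2*B)*d2)*uy + A*B*uyy))
    = (((0*A - B*(1/(2*A)*d1))/A^2 + I*((1/(2*B)*d2)/A)) / (B/A))
        * (A*B*ux + I*(A*B*uy)) := by
  have hAB : (A*A)*(B*B) ≠ 0 := mul_ne_zero (mul_ne_zero hA hA) (mul_ne_zero hB hB)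
  have huyy : uyy = -(d1 * (B*B) * ux + (A*A) * (B*B) * uxx + (A*A) * d2 * uy) / ((A*A)*(B*B)) := by
    rw [eq_div_iff hAB]
    linear_combination hdiv
  rw [huyy]
  conv_rhs => rw [div_div_eq_mul_div, div_mul_eq_mul_div, div_mul_eq_mul_div]
  rw [eq_div_iff hB]
  field_simp
  linear_combination (2*(B^2*d1*ux + A^2*B^2*uxx)) * Complex.I_sq

theorem impedance_to_vekua (Ω : Set (ℝ × ℝ)) (hΩ : IsOpen Ω)
    (σ₁ σ₂ : ℝ → ℝ) (h1 : ∀ x, 0 < σ₁ x) (h2 : ∀ y, 0 < σ₂ y)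
    (hs1 : ContDiff ℝ (⊤ : ℕ∞) σ₁) (hs2 : ContDiff ℝ (⊤ : ℕ∞) σ₂)
    (u : ℝ → ℝ → ℝ)
    (hu : ContDiffOn ℝ (⊤ : ℕ∞) (fun v : ℝ × ℝ => u v.1 v.2) Ω)
    (σ : ℝ → ℝ → ℝ) (hσ : ∀ x y, σ x y = σ₁ x * σ₂ y)
    (hdiv : ∀ v ∈ Ω,
      rpdx (fun a b => σ a b * rpdx u a b) v.1 v.2 +
        rpdy (fun a b => σ a b * rpdy u a b) v.1 v.2 = 0)
    (W : ℝ → ℝ → ℂ)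
    (hW : ∀ x y, W x y = (Real.sqrt (σ x y) * rpdx u x y : ℝ)
        - Complex.I * ((Real.sqrt (σ x y) * rpdy u x y : ℝ) : ℂ))
    (p : ℝ → ℝ → ℂ)
    (hp : ∀ x y, p x y = ((Real.sqrt (σ₂ y) / Real.sqrt (σ₁ x) : ℝ) : ℂ)) :
    ∀ v ∈ Ω, dzb W v.1 v.2 = (dzb p v.1 v.2 / p v.1 v.2) * (starRingEnd ℂ) (W v.1 v.2) := by
  intro v hv
  obtain ⟨x, y⟩ := v
  show dzb W x y = (dzb p x y / p x y) * (starRingEnd ℂ) (W x y)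
  -- notation
  set F : ℝ × ℝ → ℝ := fun w => u w.1 w.2 with hFdef
  have hFat : ∀ w ∈ Ω, ContDiffAt ℝ (⊤ : ℕ∞) F w := fun w hw => hu.contDiffAt (hΩ.mem_nhds hw)
  -- first partials equal fderiv applied to basis vectors, on Ω
  have hpdx : ∀ w ∈ Ω, rpdx u w.1 w.2 = fderiv ℝ F w (1, 0) := by
    intro w hw
    have hline : HasDerivAt (fun t : ℝ => ((t, w.2) : ℝ × ℝ)) (1, 0) w.1 :=
      (hasDerivAt_id _).prodMk (hasDerivAt_const _ _)
    have h := (((hFat w hw).differentiableAt (by simp)).hasFDerivAt).comp_hasDerivAt w.1 hline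
    exact h.deriv
  have hpdy : ∀ w ∈ Ω, rpdy u w.1 w.2 = fderiv ℝ F w (0, 1) := by
    intro w hw
    have hline : HasDerivAt (fun t : ℝ => ((w.1, t) : ℝ × ℝ)) (0, 1) w.2 :=
      (hasDerivAt_const _ _).prodMk (hasDerivAt_id _)
    have h := (((hFat w hw).differentiableAt (by simp)).hasFDerivAt).comp_hasDerivAt w.2 hline
    exact h.deriv
  -- second derivative
  set f2 := fderiv ℝ (fderiv ℝ F) (x, y) with hf2def
  have hf2 : HasFDerivAt (fderiv ℝ F) f2 (x, y) :=
    (((hFat _ hv).fderiv_right (m := 1) (WithTop.coe_le_coe.mpr le_top)).differentiableAt one_ne_zero).hasFDerivAt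
  have hsymm : f2 (1, 0) (0, 1) = f2 (0, 1) (1, 0) :=
    ((hFat _ hv).isSymmSndFDerivAt (by rw [minSmoothness_of_isRCLikeNormedField]; exact WithTop.coe_le_coe.mpr le_top)) _ _
  have hx_line : HasDerivAt (fun t : ℝ => ((t, y) : ℝ × ℝ)) (1, 0) x :=
    (hasDerivAt_id _).prodMk (hasDerivAt_const _ _)
  have hy_line : HasDerivAt (fun t : ℝ => ((x, t) : ℝ × ℝ)) (0, 1) y :=
    (hasDerivAt_const _ _).prodMk (hasDerivAt_id _)
  have hgx : HasDerivAt (fun t : ℝ => fderiv ℝ F (t, y)) (f2 (1, 0)) x :=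
    hf2.comp_hasDerivAt x hx_line
  have hgy : HasDerivAt (fun t : ℝ => fderiv ℝ F (x, t)) (f2 (0, 1)) y :=
    hf2.comp_hasDerivAt y hy_line
  -- eventual membership
  have hevx : ∀ᶠ t in nhds x, (t, y) ∈ Ω := by
    have hc : Continuous fun t : ℝ => ((t, y) : ℝ × ℝ) := continuous_id.prodMk continuous_const
    exact hc.continuousAt.preimage_mem_nhds (hΩ.mem_nhds hv)
  have hevy : ∀ᶠ t in nhds y, (x, t) ∈ Ω := by
    have hc : Continuous fun t : ℝ => ((x, t) : ℝ × ℝ) := continuous_const.prodMk continuous_id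
    exact hc.continuousAt.preimage_mem_nhds (hΩ.mem_nhds hv)
  -- second partial HasDerivAt facts
  have Hxx : HasDerivAt (fun t => rpdx u t y) (f2 (1, 0) (1, 0)) x := by
    have h := hgx.clm_apply (hasDerivAt_const x ((1 : ℝ), (0 : ℝ)))
    have h' : HasDerivAt (fun t : ℝ => fderiv ℝ F (t, y) (1, 0)) (f2 (1, 0) (1, 0)) x := by
      simpa using h
    exact h'.congr_of_eventuallyEq (by filter_upwards [hevx] with t ht; exact hpdx (t, y) ht)
  have Hxy : HasDerivAt (fun t => rpdy u t y) (f2 (1, 0) (0, 1)) x := by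
    have h := hgx.clm_apply (hasDerivAt_const x ((0 : ℝ), (1 : ℝ)))
    have h' : HasDerivAt (fun t : ℝ => fderiv ℝ F (t, y) (0, 1)) (f2 (1, 0) (0, 1)) x := by
      simpa using h
    exact h'.congr_of_eventuallyEq (by filter_upwards [hevx] with t ht; exact hpdy (t, y) ht)
  have Hyx : HasDerivAt (fun t => rpdx u x t) (f2 (0, 1) (1, 0)) y := by
    have h := hgy.clm_apply (hasDerivAt_const y ((1 : ℝ), (0 : ℝ)))
    have h' : HasDerivAt (fun t : ℝ => fderiv ℝ F (x, t) (1, 0)) (f2 (0, 1) (1, 0)) y := by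
      simpa using h
    exact h'.congr_of_eventuallyEq (by filter_upwards [hevy] with t ht; exact hpdx (x, t) ht)
  have Hyy : HasDerivAt (fun t => rpdy u x t) (f2 (0, 1) (0, 1)) y := by
    have h := hgy.clm_apply (hasDerivAt_const y ((0 : ℝ), (1 : ℝ)))
    have h' : HasDerivAt (fun t : ℝ => fderiv ℝ F (x, t) (0, 1)) (f2 (0, 1) (0, 1)) y := by
      simpa using h
    exact h'.congr_of_eventuallyEq (by filter_upwards [hevy] with t ht; exact hpdy (x, t) ht)
  -- 1D smooth coefficient derivatives
  have H1 : HasDerivAt σ₁ (deriv σ₁ x) x := ((hs1.differentiable (by simp)) x).hasDerivAt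
  have H2 : HasDerivAt σ₂ (deriv σ₂ y) y := ((hs2.differentiable (by simp)) y).hasDerivAt
  have HA : HasDerivAt (fun t => Real.sqrt (σ₁ t))
      (1 / (2 * Real.sqrt (σ₁ x)) * deriv σ₁ x) x :=
    (Real.hasDerivAt_sqrt (h1 x).ne').comp x H1
  have HB : HasDerivAt (fun t => Real.sqrt (σ₂ t))
      (1 / (2 * Real.sqrt (σ₂ y)) * deriv σ₂ y) y :=
    (Real.hasDerivAt_sqrt (h2 y).ne').comp y H2
  have hA0 : Real.sqrt (σ₁ x) ≠ 0 := (Real.sqrt_pos.mpr (h1 x)).ne'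
  have hB0 : Real.sqrt (σ₂ y) ≠ 0 := (Real.sqrt_pos.mpr (h2 y)).ne'
  -- divergence equation in terms of the chosen symbols
  have e1 : rpdx (fun a b => σ a b * rpdx u a b) x y
      = deriv σ₁ x * σ₂ y * rpdx u x y + σ₁ x * σ₂ y * (f2 (1, 0) (1, 0)) := by
    simp only [rpdx]
    simp only [hσ]
    exact ((H1.mul_const (σ₂ y)).mul Hxx).deriv
  have e2 : rpdy (fun a b => σ a b * rpdy u a b) x y
      = σ₁ x * deriv σ₂ y * rpdy u x y + σ₁ x * σ₂ y * (f2 (0, 1) (0, 1)) := by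
    simp only [rpdy]
    simp only [hσ]
    exact ((H2.const_mul (σ₁ x)).mul Hyy).deriv
  have hd := hdiv (x, y) hv
  rw [e1, e2] at hd
  have hA2 : Real.sqrt (σ₁ x) * Real.sqrt (σ₁ x) = σ₁ x := Real.mul_self_sqrt (h1 x).le
  have hB2 : Real.sqrt (σ₂ y) * Real.sqrt (σ₂ y) = σ₂ y := Real.mul_self_sqrt (h2 y).le
  have hdivR : deriv σ₁ x * (Real.sqrt (σ₂ y) * Real.sqrt (σ₂ y)) * rpdx u x y
      + (Real.sqrt (σ₁ x) * Real.sqrt (σ₁ x)) * (Real.sqrt (σ₂ y) * Real.sqrt (σ₂ y)) * (f2 (1, 0) (1, 0))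
      + ((Real.sqrt (σ₁ x) * Real.sqrt (σ₁ x)) * deriv σ₂ y * rpdy u x y
        + (Real.sqrt (σ₁ x) * Real.sqrt (σ₁ x)) * (Real.sqrt (σ₂ y) * Real.sqrt (σ₂ y)) * (f2 (0, 1) (0, 1))) = 0 := by
    rw [hA2, hB2]
    linear_combination hd
  -- derivatives of W
  have hWfunx : (fun t => W t y) = fun t =>
      ((Real.sqrt (σ₁ t) * Real.sqrt (σ₂ y) * rpdx u t y : ℝ) : ℂ)
        - Complex.I * ((Real.sqrt (σ₁ t) * Real.sqrt (σ₂ y) * rpdy u t y : ℝ) : ℂ) := by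
    funext t
    rw [hW, hσ, Real.sqrt_mul (h1 t).le]
  have hWfuny : (fun t => W x t) = fun t =>
      ((Real.sqrt (σ₁ x) * Real.sqrt (σ₂ t) * rpdx u x t : ℝ) : ℂ)
        - Complex.I * ((Real.sqrt (σ₁ x) * Real.sqrt (σ₂ t) * rpdy u x t : ℝ) : ℂ) := by
    funext t
    rw [hW, hσ, Real.sqrt_mul (h1 x).le]
  have ecpdxW : cpdx W x y
      = (((1 / (2 * Real.sqrt (σ₁ x)) * deriv σ₁ x) * Real.sqrt (σ₂ y) * rpdx u x y
          + Real.sqrt (σ₁ x) * Real.sqrt (σ₂ y) * (f2 (1, 0) (1, 0)) : ℝ) : ℂ)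
        - Complex.I * (((1 / (2 * Real.sqrt (σ₁ x)) * deriv σ₁ x) * Real.sqrt (σ₂ y) * rpdy u x y
          + Real.sqrt (σ₁ x) * Real.sqrt (σ₂ y) * (f2 (1, 0) (0, 1)) : ℝ) : ℂ) := by
    simp only [cpdx]
    rw [hWfunx]
    have h := ((((HA.mul_const (Real.sqrt (σ₂ y))).mul Hxx).ofReal_comp).sub
      ((((HA.mul_const (Real.sqrt (σ₂ y))).mul Hxy).ofReal_comp).const_mul Complex.I))
    exact h.deriv.trans (by push_cast; ring)
  have ecpdyW : cpdy W x y
      = ((Real.sqrt (σ₁ x) * (1 / (2 * Real.sqrt (σ₂ y)) * deriv σ₂ y) * rpdx u x y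
          + Real.sqrt (σ₁ x) * Real.sqrt (σ₂ y) * (f2 (0, 1) (1, 0)) : ℝ) : ℂ)
        - Complex.I * ((Real.sqrt (σ₁ x) * (1 / (2 * Real.sqrt (σ₂ y)) * deriv σ₂ y) * rpdy u x y
          + Real.sqrt (σ₁ x) * Real.sqrt (σ₂ y) * (f2 (0, 1) (0, 1)) : ℝ) : ℂ) := by
    simp only [cpdy]
    rw [hWfuny]
    have h := ((((HB.const_mul (Real.sqrt (σ₁ x))).mul Hyx).ofReal_comp).sub
      ((((HB.const_mul (Real.sqrt (σ₁ x))).mul Hyy).ofReal_comp).const_mul Complex.I))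
    exact h.deriv.trans (by push_cast; ring)
  -- derivatives of p
  have hpfunx : (fun t => p t y) = fun t =>
      ((Real.sqrt (σ₂ y) / Real.sqrt (σ₁ t) : ℝ) : ℂ) := by
    funext t; exact hp t y
  have hpfuny : (fun t => p x t) = fun t =>
      ((Real.sqrt (σ₂ t) / Real.sqrt (σ₁ x) : ℝ) : ℂ) := by
    funext t; exact hp x t
  have ecpdxp : cpdx p x y
      = (((0 * Real.sqrt (σ₁ x) - Real.sqrt (σ₂ y) * (1 / (2 * Real.sqrt (σ₁ x)) * deriv σ₁ x))
          / Real.sqrt (σ₁ x) ^ 2 : ℝ) : ℂ) := by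
    simp only [cpdx]
    rw [hpfunx]
    have h := ((hasDerivAt_const x (Real.sqrt (σ₂ y))).div HA hA0).ofReal_comp
    exact h.deriv
  have ecpdyp : cpdy p x y
      = (((1 / (2 * Real.sqrt (σ₂ y)) * deriv σ₂ y) / Real.sqrt (σ₁ x) : ℝ) : ℂ) := by
    simp only [cpdy]
    rw [hpfuny]
    have h := (HB.div_const (Real.sqrt (σ₁ x))).ofReal_comp
    exact h.deriv
  -- conjugate of W
  have hconj : (starRingEnd ℂ) (W x y)
      = ((Real.sqrt (σ₁ x) * Real.sqrt (σ₂ y) * rpdx u x y : ℝ) : ℂ)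
        + Complex.I * ((Real.sqrt (σ₁ x) * Real.sqrt (σ₂ y) * rpdy u x y : ℝ) : ℂ) := by
    rw [hW, hσ, Real.sqrt_mul (h1 x).le]
    simp only [map_sub, map_mul, Complex.conj_ofReal, Complex.conj_I]
    ring
  -- cast the divergence identity
  have hdivC : ((deriv σ₁ x : ℝ) : ℂ) * (((Real.sqrt (σ₂ y) : ℝ) : ℂ) * ((Real.sqrt (σ₂ y) : ℝ) : ℂ)) * ((rpdx u x y : ℝ) : ℂ)
      + (((Real.sqrt (σ₁ x) : ℝ) : ℂ) * ((Real.sqrt (σ₁ x) : ℝ) : ℂ)) * (((Real.sqrt (σ₂ y) : ℝ) : ℂ) * ((Real.sqrt (σ₂ y) : ℝ) : ℂ)) * ((f2 (1, 0) (1, 0) : ℝ) : ℂ)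
      + ((((Real.sqrt (σ₁ x) : ℝ) : ℂ) * ((Real.sqrt (σ₁ x) : ℝ) : ℂ)) * ((deriv σ₂ y : ℝ) : ℂ) * ((rpdy u x y : ℝ) : ℂ)
        + (((Real.sqrt (σ₁ x) : ℝ) : ℂ) * ((Real.sqrt (σ₁ x) : ℝ) : ℂ)) * (((Real.sqrt (σ₂ y) : ℝ) : ℂ) * ((Real.sqrt (σ₂ y) : ℝ) : ℂ)) * ((f2 (0, 1) (0, 1) : ℝ) : ℂ)) = 0 := by
    exact_mod_cast hdivR
  have hAC : ((Real.sqrt (σ₁ x) : ℝ) : ℂ) ≠ 0 := Complex.ofReal_ne_zero.mpr hA0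
  have hBC : ((Real.sqrt (σ₂ y) : ℝ) : ℂ) ≠ 0 := Complex.ofReal_ne_zero.mpr hB0
  have halg := vekua_alg ((Real.sqrt (σ₁ x) : ℝ) : ℂ) ((Real.sqrt (σ₂ y) : ℝ) : ℂ)
    ((deriv σ₁ x : ℝ) : ℂ) ((deriv σ₂ y : ℝ) : ℂ) ((rpdx u x y : ℝ) : ℂ) ((rpdy u x y : ℝ) : ℂ)
    ((f2 (1, 0) (1, 0) : ℝ) : ℂ) ((f2 (0, 1) (0, 1) : ℝ) : ℂ) ((f2 (1, 0) (0, 1) : ℝ) : ℂ)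
    hAC hBC hdivC
  have hsymmC : ((f2 (0, 1) (1, 0) : ℝ) : ℂ) = ((f2 (1, 0) (0, 1) : ℝ) : ℂ) := by
    rw [hsymm]
  simp only [dzb]
  rw [ecpdxW, ecpdyW, ecpdxp, ecpdyp, hconj, hp x y]
  push_cast
  rw [hsymmC]
  linear_combination halg
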